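/- Let k = 2 and m ≥ 2, and let L'_2m = [L_2m, L_2m] denote the commutator ideal of L_2m, i.e., the K-linear span of all brackets [u,v] with u, v ∈ L_2m. Then L'_2m is a C_2m^{(0)}-module: for every u ∈ L'_2m and every c ∈ C_2m^{(0)}, the matrix product u·c belongs to L'_2m. -/

import Mathlib

open scoped BigOperators
noncomputable section

attribute [local instance 100] LieRing.ofAssociativeRing

/-- `Ω = K[y_pq^(i)]`, matrices over the polynomial ring in `k²m` variables. -/
abbrev Mat (K : Type) [Field K] (k m : ℕ) :=
  Matrix (Fin k) (Fin k) (MvPolynomial (Fin m × Fin k × Fin k) K)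

/-- The generic `k × k` matrices `y_i = (y_pq^(i))`. -/
def genY (K : Type) [Field K] (k m : ℕ) (i : Fin m) : Mat K k m :=
  Matrix.of fun p q => MvPolynomial.X (i, p, q)

/-- The scalar matrix `f · I` for `f ∈ Ω`. -/
def scalarOf (K : Type) [Field K] (k m : ℕ)
    (f : MvPolynomial (Fin m × Fin k × Fin k) K) : Mat K k m :=
  algebraMap _ _ f

/-- `R_km`: the generic matrix algebra, generated by `y_1, …, y_m`. -/
def Rkm (K : Type) [Field K] (k m : ℕ) : Subalgebra K (Mat K k m) :=
  Algebra.adjoin K (Set.range (genY K k m))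

/-- `C_km`: the pure trace algebra, generated by the `tr(y_{i_1} ⋯ y_{i_l}) · I`, `l ≥ 1`. -/
def Ckm (K : Type) [Field K] (k m : ℕ) : Subalgebra K (Mat K k m) :=
  Algebra.adjoin K
    {x | ∃ (l : ℕ) (w : Fin (l + 1) → Fin m),
      x = scalarOf K k m (Matrix.trace ((List.ofFn fun j => genY K k m (w j)).prod))}

/-- `T_km`: the mixed trace algebra, generated by `R_km ∪ C_km`. -/
def Tkm (K : Type) [Field K] (k m : ℕ) : Subalgebra K (Mat K k m) :=
  Rkm K k m ⊔ Ckm K k m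

/-- The generic traceless matrices `z_i = y_i - (1/k)·tr(y_i)·I`. -/
def genZ (K : Type) [Field K] (k m : ℕ) (i : Fin m) : Mat K k m :=
  genY K k m i - (k : K)⁻¹ • scalarOf K k m (Matrix.trace (genY K k m i))

/-- `W_km`: the algebra generated by the generic traceless matrices `z_1, …, z_m`. -/
def Wkm (K : Type) [Field K] (k m : ℕ) : Subalgebra K (Mat K k m) :=
  Algebra.adjoin K (Set.range (genZ K k m))

/-- `C_km⁰`: the algebra generated by the `tr(z_{i_1} ⋯ z_{i_l}) · I`, `l ≥ 1`. -/
def Ckm0 (K : Type) [Field K] (k m : ℕ) : Subalgebra K (Mat K k m) :=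
  Algebra.adjoin K
    {x | ∃ (l : ℕ) (w : Fin (l + 1) → Fin m),
      x = scalarOf K k m (Matrix.trace ((List.ofFn fun j => genZ K k m (w j)).prod))}

/-- `T_km⁰`: the algebra generated by `W_km ∪ C_km⁰`. -/
def Tkm0 (K : Type) [Field K] (k m : ℕ) : Subalgebra K (Mat K k m) :=
  Wkm K k m ⊔ Ckm0 K k m

/-- The subspace of matrices all of whose entries have total degree at most `n`,
i.e. `M_k(Ω_{≤n})`. -/
def degLE (K : Type) [Field K] (k m n : ℕ) : Submodule K (Mat K k m) where
  carrier := {a | ∀ p q, (a p q).totalDegree ≤ n}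
  add_mem' := by
    intro a b ha hb p q
    calc ((a + b) p q).totalDegree = (a p q + b p q).totalDegree := by simp [Matrix.add_apply]
    _ ≤ max (a p q).totalDegree (b p q).totalDegree := MvPolynomial.totalDegree_add _ _
    _ ≤ n := max_le (ha p q) (hb p q)
  zero_mem' := by intro p q; simp
  smul_mem' := by
    intro c a ha p q
    calc ((c • a) p q).totalDegree = (c • a p q).totalDegree := by simp [Matrix.smul_apply]
    _ ≤ (a p q).totalDegree := MvPolynomial.totalDegree_smul_le _ _
    _ ≤ n := ha p q

/-- `L_2m`: the Lie subalgebra of `M_2(Ω)` (with `[a,b] = ab − ba`) generated by the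
generic traceless matrices `z_1, …, z_m`. -/
def L2m (K : Type) [Field K] (m : ℕ) : LieSubalgebra K (Mat K 2 m) :=
  LieSubalgebra.lieSpan K (Mat K 2 m) (Set.range (genZ K 2 m))

/-- The commutator ideal `L'_2m = [L_2m, L_2m]`: the `K`-linear span of all brackets
`[u, v]` with `u, v ∈ L_2m`. -/
def L2m' (K : Type) [Field K] (m : ℕ) : Submodule K (Mat K 2 m) :=
  Submodule.span K {x | ∃ u ∈ L2m K m, ∃ v ∈ L2m K m, x = ⁅u, v⁆}

/-! For traceless `2 × 2` matrices, Cayley–Hamilton polarizes to `ab + ba = tr(ab)·1`, which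
turns double brackets into `[x, [y, z]] = 2 tr(xy) z - 2 tr(xz) y`. Applying this to three
double brackets of elements of `L_2m` and bracketing once more expresses `4 tr(ab)·[u, v]` as a
combination of commutators of elements of `L_2m`, so multiplication by `tr(ab)` preserves `L'_2m`.
The same identity, in the form `2ab = tr(ab)·1 + [a, b]`, reduces the trace of any product of
elements of `L_2m` to a polynomial in the traces `tr(ab)`, so `C_2m⁰` lies in the algebra they
generate. -/

namespace Matrix

variable {R : Type*} [CommRing R] {a b c u v : Matrix (Fin 2) (Fin 2) R}

theorem mul_add_mul_eq_trace_smul_one_of_trace_eq_zero (ha : a.trace = 0) (hb : b.trace = 0) :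
    a * b + b * a = (a * b).trace • 1 := by
  simp only [trace, Fin.sum_univ_two, diag] at ha hb
  ext p q
  fin_cases p <;> fin_cases q <;>
    simp only [add_apply, mul_apply, smul_apply, Fin.sum_univ_two, trace, diag_apply, one_apply_eq,
      one_apply_ne, ne_eq, zero_ne_one, one_ne_zero, not_false_eq_true, smul_eq_mul, mul_one,
      mul_zero, Fin.isValue, Fin.zero_eta, Fin.mk_one]
  · linear_combination a 0 0 * hb - b 1 1 * ha
  · linear_combination b 0 1 * ha + a 0 1 * hb
  · linear_combination b 1 0 * ha + a 1 0 * hb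
  · linear_combination a 1 1 * hb - b 0 0 * ha

theorem two_mul_trace_mul_mul_of_trace_eq_zero (ha : a.trace = 0) (hb : b.trace = 0)
    (c : Matrix (Fin 2) (Fin 2) R) :
    2 * (a * b * c).trace = (a * b).trace * c.trace + (⁅a, b⁆ * c).trace := by
  have h : (2 : R) • (a * b) = (a * b).trace • 1 + ⁅a, b⁆ := by
    rw [← mul_add_mul_eq_trace_smul_one_of_trace_eq_zero ha hb, Ring.lie_def, two_smul]
    abel
  rw [← smul_eq_mul, ← trace_smul, ← smul_mul_assoc, h, add_mul, trace_add, smul_one_mul,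
    trace_smul, smul_eq_mul]

theorem lie_lie_eq_of_trace_eq_zero (ha : a.trace = 0) (hb : b.trace = 0) (hc : c.trace = 0) :
    ⁅a, ⁅b, c⁆⁆ = (2 * (a * b).trace) • c - (2 * (a * c).trace) • b := by
  have hab := mul_add_mul_eq_trace_smul_one_of_trace_eq_zero ha hb
  have hac := mul_add_mul_eq_trace_smul_one_of_trace_eq_zero ha hc
  have habc : a * b * c + b * a * c = (a * b).trace • c := by rw [← add_mul, hab, smul_one_mul]
  have hacb : a * c * b + c * a * b = (a * c).trace • b := by rw [← add_mul, hac, smul_one_mul]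
  have hbac : b * (a * c) + b * (c * a) = (a * c).trace • b := by rw [← mul_add, hac, mul_smul_one]
  have hcab : c * (a * b) + c * (b * a) = (a * b).trace • c := by rw [← mul_add, hab, mul_smul_one]
  linear_combination (norm := (simp only [Ring.lie_def, mul_sub, sub_mul, mul_assoc]; module))
    habc - hacb - hbac + hcab

theorem four_trace_mul_smul_lie_eq (ha : a.trace = 0) (hb : b.trace = 0) (hu : u.trace = 0)
    (hv : v.trace = 0) :
    (4 * (a * b).trace) • ⁅u, v⁆ = ⁅⁅b, ⁅v, u⁆⁆, a⁆ - ⁅⁅b, ⁅u, a⁆⁆, v⁆ - ⁅⁅b, ⁅a, v⁆⁆, u⁆ := by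
  rw [lie_lie_eq_of_trace_eq_zero hb hv hu, lie_lie_eq_of_trace_eq_zero hb hu ha,
    lie_lie_eq_of_trace_eq_zero hb ha hv]
  simp only [sub_lie, smul_lie, ← lie_skew a u, ← lie_skew a v, ← lie_skew v u, trace_mul_comm b a]
  module

end Matrix

def Submodule.mulRightStabilizer {R A : Type*} [CommSemiring R] [Semiring A] [Algebra R A]
    (N : Submodule R A) : Subalgebra R A where
  carrier := {c | ∀ u ∈ N, u * c ∈ N}
  mul_mem' hc hd u hu := mul_assoc u _ _ ▸ hd _ (hc u hu)
  add_mem' hc hd u hu := (mul_add u _ _).symm ▸ add_mem (hc u hu) (hd u hu)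
  algebraMap_mem' r u hu := by
    rw [Algebra.algebraMap_eq_smul_one, mul_smul_one]
    exact N.smul_mem r hu

section GenericTracelessMatrices

variable {K : Type} [Field K] {k m : ℕ}

theorem trace_scalarOf (f : MvPolynomial (Fin m × Fin k × Fin k) K) :
    (scalarOf K k m f).trace = (k : K) • f := by
  rw [scalarOf, Algebra.algebraMap_eq_smul_one, Matrix.trace_smul, Matrix.trace_one,
    Fintype.card_fin, smul_eq_mul, mul_comm, ← nsmul_eq_mul, Nat.cast_smul_eq_nsmul]

theorem trace_genZ (hk : (k : K) ≠ 0) (i : Fin m) : (genZ K k m i).trace = 0 := by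
  rw [genZ, Matrix.trace_sub, Matrix.trace_smul, trace_scalarOf, smul_smul, inv_mul_cancel₀ hk,
    one_smul, sub_self]

variable [NeZero (2 : K)]

theorem trace_eq_zero_of_mem_L2m {x : Mat K 2 m} (hx : x ∈ L2m K m) : x.trace = 0 := by
  induction hx using LieSubalgebra.lieSpan_induction with
  | mem x hx =>
    obtain ⟨i, rfl⟩ := hx
    exact trace_genZ (by exact_mod_cast two_ne_zero) i
  | zero => exact Matrix.trace_zero ..
  | add x y _ _ hx hy => rw [Matrix.trace_add, hx, hy, add_zero]
  | smul c x _ hx => rw [Matrix.trace_smul, hx, smul_zero]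
  | lie x y _ _ _ _ => exact LieAlgebra.matrix_trace_commutator_zero _ _ x y

theorem trace_mul_smul_lie_mem_L2m' {a b u v : Mat K 2 m} (ha : a ∈ L2m K m) (hb : b ∈ L2m K m)
    (hu : u ∈ L2m K m) (hv : v ∈ L2m K m) : (a * b).trace • ⁅u, v⁆ ∈ L2m' K m := by
  have lie_mem_L2m {x y : Mat K 2 m} (hx : x ∈ L2m K m) (hy : y ∈ L2m K m) : ⁅x, y⁆ ∈ L2m K m :=
    (L2m K m).lie_mem hx hy
  have lie_mem_L2m' {x y : Mat K 2 m} (hx : x ∈ L2m K m) (hy : y ∈ L2m K m) :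
      ⁅x, y⁆ ∈ L2m' K m :=
    Submodule.subset_span ⟨x, hx, y, hy, rfl⟩
  have h4 : (4 : K) • ((a * b).trace • ⁅u, v⁆) ∈ L2m' K m := by
    rw [← algebraMap_smul (MvPolynomial (Fin m × Fin 2 × Fin 2) K), smul_smul, map_ofNat,
      Matrix.four_trace_mul_smul_lie_eq (trace_eq_zero_of_mem_L2m ha) (trace_eq_zero_of_mem_L2m hb)
        (trace_eq_zero_of_mem_L2m hu) (trace_eq_zero_of_mem_L2m hv)]
    exact sub_mem (sub_mem (lie_mem_L2m' (lie_mem_L2m hb (lie_mem_L2m hv hu)) ha)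
      (lie_mem_L2m' (lie_mem_L2m hb (lie_mem_L2m hu ha)) hv))
      (lie_mem_L2m' (lie_mem_L2m hb (lie_mem_L2m ha hv)) hu)
  have h4_ne_zero : (4 : K) ≠ 0 := by
    rw [show (4 : K) = 2 * 2 by norm_num]
    exact mul_ne_zero two_ne_zero two_ne_zero
  exact (Submodule.smul_mem_iff _ h4_ne_zero).mp h4

theorem scalarOf_trace_mul_mem_mulRightStabilizer {a b : Mat K 2 m} (ha : a ∈ L2m K m)
    (hb : b ∈ L2m K m) : scalarOf K 2 m (a * b).trace ∈ (L2m' K m).mulRightStabilizer := by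
  intro u hu
  rw [scalarOf, Algebra.algebraMap_eq_smul_one, mul_smul_one]
  induction hu using Submodule.span_induction with
  | mem x hx =>
    obtain ⟨p, hp, q, hq, rfl⟩ := hx
    exact trace_mul_smul_lie_mem_L2m' ha hb hp hq
  | zero => rw [smul_zero]; exact zero_mem _
  | add x y _ _ hx hy => rw [smul_add]; exact add_mem hx hy
  | smul c x _ hx => rw [smul_comm]; exact Submodule.smul_mem _ c hx

theorem scalarOf_trace_list_prod_mem {S : Subalgebra K (Mat K 2 m)}
    (hS : ∀ a ∈ L2m K m, ∀ b ∈ L2m K m, scalarOf K 2 m (a * b).trace ∈ S)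
    {l : List (Mat K 2 m)} (hl : ∀ x ∈ l, x ∈ L2m K m) : scalarOf K 2 m l.prod.trace ∈ S := by
  suffices (∀ a ∈ L2m K m, scalarOf K 2 m (a * l.prod).trace ∈ S) ∧
      scalarOf K 2 m l.prod.trace ∈ S from this.2
  induction l with
  | nil =>
    refine ⟨fun a ha => ?_, ?_⟩
    · rw [List.prod_nil, mul_one, trace_eq_zero_of_mem_L2m ha, scalarOf, map_zero]
      exact zero_mem S
    · rw [List.prod_nil, Matrix.trace_one, scalarOf, map_natCast]
      exact natCast_mem S _
  | cons b l ih =>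
    have hb := hl b List.mem_cons_self
    obtain ⟨ih_mul, ih_prod⟩ := ih fun x hx => hl x (List.mem_cons_of_mem b hx)
    refine ⟨fun a ha => ?_, by rw [List.prod_cons]; exact ih_mul b hb⟩
    have h2 := congrArg (scalarOf K 2 m) (Matrix.two_mul_trace_mul_mul_of_trace_eq_zero
      (trace_eq_zero_of_mem_L2m ha) (trace_eq_zero_of_mem_L2m hb) l.prod)
    simp only [scalarOf, map_mul, map_add, map_ofNat] at h2
    refine (Submodule.smul_mem_iff (Subalgebra.toSubmodule S) (two_ne_zero : (2 : K) ≠ 0)).mp ?_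
    rw [Subalgebra.mem_toSubmodule, List.prod_cons, two_smul, ← two_mul, ← mul_assoc, scalarOf, h2]
    exact add_mem (mul_mem (hS a ha b hb) ih_prod) (ih_mul _ ((L2m K m).lie_mem ha hb))

end GenericTracelessMatrices

theorem stmt13_general (K : Type) [Field K] [CharZero K] (m : ℕ) :
    ∀ u ∈ L2m' K m, ∀ c ∈ Ckm0 K 2 m, u * c ∈ L2m' K m := by
  have hC : Ckm0 K 2 m ≤ (L2m' K m).mulRightStabilizer := by
    refine Algebra.adjoin_le ?_
    rintro _ ⟨l, w, rfl⟩
    refine scalarOf_trace_list_prod_mem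
      (fun a ha b hb => scalarOf_trace_mul_mem_mulRightStabilizer ha hb) ?_
    simp only [List.mem_ofFn]
    rintro _ ⟨j, rfl⟩
    exact LieSubalgebra.subset_lieSpan ⟨w j, rfl⟩
  exact fun u hu c hc => hC hc u hu

/-- For `k = 2`, `m ≥ 2`, the commutator ideal `L'_2m` is a
`C_2m⁰`-module: `u·c ∈ L'_2m` for all `u ∈ L'_2m` and `c ∈ C_2m⁰`. -/
theorem stmt13 (K : Type) [Field K] [CharZero K] (m : ℕ) (hm : 2 ≤ m) :
    ∀ u ∈ L2m' K m, ∀ c ∈ Ckm0 K 2 m, u * c ∈ L2m' K m :=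
  stmt13_general K m
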